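/- (Positions of the occurrences of envelope words.) For every m ≥ 1 and every p ≥ 0: L(E_{m,1},p+1) = p·2^m − N₁(b,p)·2^{m−1} + 1, and L(E_{m,2},p+1) = (3p+2)·2^{m−1} − N₂(a,p)·2^m + N₂(b,p)·2^{m+1} + 1, where N₁(b,p) is the number of letters b among the first p letters of Θ₁, and N₂(x,p) is the number of letters x among the first p letters of Θ₂. -/

import Mathlib

namespace PD

/-- The period-doubling substitution on the alphabet `Bool`,
where `false` stands for the letter `a` and `true` for the letter `b`:
`σ(a) = ab`, `σ(b) = aa`. -/
def sub : Bool → List Bool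
  | false => [false, true]
  | true  => [false, false]

/-- The substitution applied to a finite word. -/
def subW (w : List Bool) : List Bool := w.flatMap sub

/-- `A m = σ^m(a)`. -/
def A (m : ℕ) : List Bool := subW^[m] [false]

/-- `B m = σ^m(b)`. -/
def B (m : ℕ) : List Bool := subW^[m] [true]

/-- The doubling sequence `D∞` (0-indexed: `D n` is the `(n+1)`-th letter),
the fixed point of `σ` beginning with `a`; `A m` is a prefix of `A (m+1)`,
and `A (n+1)` has length `2^(n+1) > n`. -/
def D (n : ℕ) : Bool := (A (n + 1)).getD n false

/-- `δ m`, the last letter of `A m`. -/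
def delta (m : ℕ) : Bool := (A m).getLastD false

/-- The envelope words (`i ∈ {1,2}`): `E m 1 = A m` minus its last letter,
`E m 2 = A (m-1) ++ (A m` minus its last letter `)`. -/
def E (m i : ℕ) : List Bool :=
  if i = 1 then (A m).dropLast else A (m - 1) ++ (A m).dropLast

/-- `w` occurs at the (1-indexed) position `j` in the finite word `τ`. -/
def OccursIn (w τ : List Bool) (j : ℕ) : Prop :=
  1 ≤ j ∧ (τ.drop (j - 1)).take w.length = w

/-- `w` occurs at the (1-indexed) position `j` in the doubling sequence. -/
def OccursD (w : List Bool) (j : ℕ) : Prop :=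
  1 ≤ j ∧ ∀ k < w.length, D (j - 1 + k) = w.getD k false

/-- `w` is a factor of the doubling sequence. -/
def FactorD (w : List Bool) : Prop := ∃ j, OccursD w j

/-- `L w p`: the (1-indexed) starting position of the `p`-th occurrence of `w`
in the doubling sequence, occurrences being ordered by starting position.
(Each factor occurs infinitely often, so `Nat.nth` enumerates all occurrences
in increasing order.) -/
noncomputable def L (w : List Bool) (p : ℕ) : ℕ := Nat.nth (OccursD w) (p - 1)

/-- The strict total order on envelope words:
`E m₁ i₁ ⊏ E m₂ i₂` iff `m₁ < m₂`, or `m₁ = m₂` and `i₁ < i₂`. -/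
def EnvLt (m₁ i₁ m₂ i₂ : ℕ) : Prop := m₁ < m₂ ∨ (m₁ = m₂ ∧ i₁ < i₂)

/-- `Env(w) = E m i`: the envelope word `E m i` is the `⊏`-minimal envelope
word containing `w` as a factor. -/
def IsEnv (w : List Bool) (m i : ℕ) : Prop :=
  1 ≤ m ∧ (i = 1 ∨ i = 2) ∧ w <:+: E m i ∧
    ∀ m' i', 1 ≤ m' → (i' = 1 ∨ i' = 2) → EnvLt m' i' m i → ¬ w <:+: E m' i'

/-- The substitution `φ₁(a) = a`, `φ₁(b) = bb`. -/
def phi1 : Bool → List Bool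
  | false => [false]
  | true  => [true, true]

/-- `Θ₁ = φ₁(D∞)` (0-indexed): `φ₁(A (n+1))` is a prefix of `Θ₁` of length `> n`. -/
def Theta1 (n : ℕ) : Bool := ((A (n + 1)).flatMap phi1).getD n false

/-- The substitution `φ₂(a) = ab`, `φ₂(b) = acac`, over the alphabet `Fin 3`
where `0` stands for `a`, `1` for `b` and `2` for `c`. -/
def phi2 : Bool → List (Fin 3)
  | false => [0, 1]
  | true  => [0, 2, 0, 2]

/-- `Θ₂ = φ₂(D∞)` (0-indexed). -/
def Theta2 (n : ℕ) : Fin 3 := ((A (n + 1)).flatMap phi2).getD n 0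

/-- `N₁(x,p)`: the number of letters `x` among the first `p` letters of `Θ₁`. -/
def N1 (x : Bool) (p : ℕ) : ℕ := ((List.range p).map Theta1).count x

/-- `N₂(x,p)`: the number of letters `x` among the first `p` letters of `Θ₂`. -/
def N2 (x : Fin 3) (p : ℕ) : ℕ := ((List.range p).map Theta2).count x

end PD

/-!
Since `D∞ = σ(D∞)`, `D(2k) = a` and `D(2k+1)` is the letter other than `D(k)`. Put
`τ(w) = σ(w)·a`; then `E_{n+1,1} = τⁿ(a)` and `E_{n+1,2} = τⁿ(aa)`, and for a word `w` beginning
with `a` the word `τ(w)` occurs at (0-indexed) `s` iff `s = 2t` and `w` occurs at `t`: the letter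
`b` at offset one forces `s` to be even. Hence the occurrences of `E_{n+1,i}` are those of `a`,
resp. `aa`, scaled by `2ⁿ`.

The letters `a` of `D∞ = σ(D∞)` come one per block `σ(a) = ab` and two per block `σ(b) = aa`, so
the gaps between consecutive ones are `2` for every letter `a` of `Θ₁ = φ₁(D∞)` and `1` for every
`b`. Likewise the factors `aa` sit at `8k+2, 8k+3`, and also at `8k+6, 8k+7` when `D(k) = b`, with
gaps `1, 7, 3` for the letters `a, b, c` of `Θ₂ = φ₂(D∞)`. Summing the gaps gives both formulas.
-/

namespace List

theorem getD_of_isPrefix {α : Type*} {u v : List α} (h : u <+: v) {n : ℕ} (hn : n < u.length)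
    (d : α) : v.getD n d = u.getD n d := by
  obtain ⟨w, rfl⟩ := h
  exact List.getD_append _ _ _ _ hn

theorem getD_flatMap_mul_add {α β : Type*} {f : α → List β} {n : ℕ}
    (hf : ∀ x, (f x).length = n) {l : List α} {k r : ℕ} (hk : k < l.length) (hr : r < n)
    (a : α) (b : β) : (l.flatMap f).getD (n * k + r) b = (f (l.getD k a)).getD r b := by
  induction l generalizing k with
  | nil => simp at hk
  | cons x l ih =>
    cases k with
    | zero => simpa using List.getD_append _ _ _ _ (by rwa [hf])
    | succ k =>
      rw [List.flatMap_cons, List.getD_append_right _ _ _ _ (by rw [hf]; nlinarith), hf,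
        show n * (k + 1) + r - n = n * k + r by rw [mul_add]; omega]
      exact ih (by simpa using hk)

theorem length_le_length_flatMap {α β : Type*} {f : α → List β} (hf : ∀ x, f x ≠ [])
    (l : List α) : l.length ≤ (l.flatMap f).length := by
  induction l with
  | nil => simp
  | cons x l ih =>
    have := List.length_pos_iff.2 (hf x)
    simp only [List.flatMap_cons, List.length_append, List.length_cons]; omega

theorem sum_map_eq_sum_count_smul {ι M : Type*} [Fintype ι] [DecidableEq ι] [AddCommMonoid M]
    (l : List ι) (f : ι → M) : (l.map f).sum = ∑ x, l.count x • f x := by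
  rw [Finset.sum_list_map_count]
  exact Finset.sum_subset (Finset.subset_univ _) fun x _ hx => by
    rw [List.count_eq_zero_of_not_mem (by simpa using hx), zero_smul]

end List

theorem Nat.nth_eq_of_strictMono {p : ℕ → Prop} {f : ℕ → ℕ} (hf : StrictMono f)
    (hp : ∀ j, p j ↔ ∃ n, f n = j) : Nat.nth p = f := by
  have hrange : Set.ofPred p = Set.range f := Set.ext hp
  have hinf : (Set.ofPred p).Infinite := hrange ▸ Set.infinite_range_of_injective hf.injective
  funext n
  refine (Nat.eq_nth_of_strictMonoOn_of_mapsTo_of_surjOn f ?_ ?_ (hf.strictMonoOn _)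
    (fun hfin => absurd hfin hinf)).symm
  · intro j hj
    obtain ⟨n, rfl⟩ := (hp j).1 hj
    exact ⟨n, fun hfin => absurd hfin hinf, rfl⟩
  · exact fun _ _ => (hp _).2 ⟨_, rfl⟩

theorem strictMono_sum_map_range {β : Type*} (y : ℕ → β) {g : β → ℕ} (hg : ∀ x, 0 < g x) :
    StrictMono fun p => (((List.range p).map y).map g).sum :=
  strictMono_nat_of_lt_succ fun p => by simp [List.range_succ, hg]

namespace PD

theorem A_succ (m : ℕ) : A (m + 1) = subW (A m) := Function.iterate_succ_apply' ..

theorem length_sub (x : Bool) : (sub x).length = 2 := by cases x <;> rfl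

theorem length_subW (w : List Bool) : (subW w).length = 2 * w.length := by
  simp [subW, length_sub, mul_comm]

theorem length_A (m : ℕ) : (A m).length = 2 ^ m := by
  induction m with
  | zero => rfl
  | succ m ih => rw [A_succ, length_subW, ih, pow_succ, mul_comm]

theorem A_prefix_A_succ (m : ℕ) : A m <+: A (m + 1) := by
  induction m with
  | zero => exact ⟨[true], rfl⟩
  | succ m ih => rw [A_succ, A_succ (m + 1)]; exact ih.flatMap sub

theorem A_prefix_A {m M : ℕ} (h : m ≤ M) : A m <+: A M := by
  induction h with
  | refl => exact List.prefix_refl _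
  | step _ ih => exact ih.trans (A_prefix_A_succ _)

theorem D_eq_getD_A {n M : ℕ} (h : n < 2 ^ M) : D n = (A M).getD n false := by
  have hn : n < 2 ^ (n + 1) :=
    Nat.lt_two_pow_self.trans (Nat.pow_lt_pow_right one_lt_two n.lt_succ_self)
  rcases le_total (n + 1) M with hle | hle
  · exact (List.getD_of_isPrefix (A_prefix_A hle) (by rwa [length_A]) _).symm
  · exact List.getD_of_isPrefix (A_prefix_A hle) (by rwa [length_A]) _

theorem D_two_mul_add {r : ℕ} (hr : r < 2) (k : ℕ) :
    D (2 * k + r) = (sub (D k)).getD r false := by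
  have hk : k < 2 ^ k := Nat.lt_two_pow_self
  rw [D_eq_getD_A (M := k + 1) (by rw [pow_succ]; omega), A_succ, D_eq_getD_A hk]
  exact List.getD_flatMap_mul_add length_sub (by rwa [length_A]) hr _ _

theorem D_two_mul (k : ℕ) : D (2 * k) = false := by
  rw [← add_zero (2 * k), D_two_mul_add zero_lt_two]; cases D k <;> rfl

theorem D_two_mul_add_one (k : ℕ) : D (2 * k + 1) = !D k := by
  rw [D_two_mul_add one_lt_two]; cases D k <;> rfl

theorem D_eq_false_iff (t : ℕ) :
    D t = false ↔ ∃ k, t = 2 * k ∨ (t = 2 * k + 1 ∧ D k = true) := by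
  obtain ⟨k, rfl | rfl⟩ := Nat.even_or_odd' t
  · simp only [D_two_mul, true_iff]; exact ⟨k, Or.inl rfl⟩
  · rw [D_two_mul_add_one, Bool.not_eq_false']
    constructor
    · exact fun h => ⟨k, Or.inr ⟨rfl, h⟩⟩
    · rintro ⟨j, h | ⟨h, hj⟩⟩
      · omega
      · obtain rfl : j = k := by omega
        exact hj

theorem D_eq_true_iff (t : ℕ) : D t = true ↔ ∃ j, t = 2 * j + 1 ∧ D j = false := by
  obtain ⟨k, rfl | rfl⟩ := Nat.even_or_odd' t
  · simp only [D_two_mul, Bool.false_eq_true, false_iff, not_exists, not_and]; omega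
  · rw [D_two_mul_add_one, Bool.not_eq_true']
    constructor
    · exact fun h => ⟨k, rfl, h⟩
    · rintro ⟨j, h, hj⟩
      obtain rfl : j = k := by omega
      exact hj

theorem D_and_D_succ_eq_false_iff (t : ℕ) :
    D t = false ∧ D (t + 1) = false ↔ ∃ i, (t = 2 * i ∨ t = 2 * i + 1) ∧ D i = true := by
  obtain ⟨k, rfl | rfl⟩ := Nat.even_or_odd' t
  · rw [D_two_mul, D_two_mul_add_one, Bool.not_eq_false']
    constructor
    · exact fun h => ⟨k, Or.inl rfl, h.2⟩
    · rintro ⟨j, h, hj⟩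
      obtain rfl : j = k := by omega
      exact ⟨rfl, hj⟩
  · rw [D_two_mul_add_one, show 2 * k + 1 + 1 = 2 * (k + 1) by ring, D_two_mul,
      Bool.not_eq_false']
    constructor
    · exact fun h => ⟨k, Or.inr rfl, h.1⟩
    · rintro ⟨j, h, hj⟩
      obtain rfl : j = k := by omega
      exact ⟨hj, rfl⟩

theorem D_and_D_succ_eq_false_iff_exists_eight_mul (t : ℕ) : D t = false ∧ D (t + 1) = false ↔
    ∃ k, t = 2 + 8 * k ∨ t = 2 + 8 * k + 1 ∨
      (D k = true ∧ (t = 2 + 8 * k + 4 ∨ t = 2 + 8 * k + 5)) := by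
  rw [D_and_D_succ_eq_false_iff]
  constructor
  · rintro ⟨i, hi, hDi⟩
    obtain ⟨j, rfl, hDj⟩ := (D_eq_true_iff i).1 hDi
    obtain ⟨k, rfl | ⟨rfl, hDk⟩⟩ := (D_eq_false_iff j).1 hDj
    · exact ⟨k, by omega⟩
    · exact ⟨k, Or.inr (Or.inr ⟨hDk, by omega⟩)⟩
  · rintro ⟨k, h | h | ⟨hDk, h⟩⟩
    · exact ⟨4 * k + 1, by omega, (D_eq_true_iff _).2 ⟨2 * k, by ring, D_two_mul k⟩⟩
    · exact ⟨4 * k + 1, by omega, (D_eq_true_iff _).2 ⟨2 * k, by ring, D_two_mul k⟩⟩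
    · exact ⟨4 * k + 3, by omega, (D_eq_true_iff _).2 ⟨2 * k + 1, by ring,
        (D_eq_false_iff _).2 ⟨k, Or.inr ⟨rfl, hDk⟩⟩⟩⟩

def occursAt (w : List Bool) (s : ℕ) : Prop := ∀ i < w.length, D (s + i) = w.getD i false

theorem occursD_add_one_iff (w : List Bool) (s : ℕ) : OccursD w (s + 1) ↔ occursAt w s := by
  simp [OccursD, occursAt]

def subWSnoc (w : List Bool) : List Bool := subW w ++ [false]

theorem subWSnoc_append (u v : List Bool) : subWSnoc (u ++ v) = subW u ++ subWSnoc v := by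
  simp [subWSnoc, subW]

theorem head?_subWSnoc (w : List Bool) : (subWSnoc w).head? = some false := by
  cases w with
  | nil => rfl
  | cons x w => cases x <;> rfl

theorem getD_sub_one (x : Bool) : (sub x).getD 1 false = !x := by cases x <;> rfl

theorem occursAt_subWSnoc_iff {w : List Bool} (hw : w.head? = some false) (s : ℕ) :
    occursAt (subWSnoc w) s ↔ ∃ t, s = 2 * t ∧ occursAt w t := by
  obtain ⟨w, rfl⟩ : ∃ w', w = false :: w' := by
    cases w with
    | nil => simp at hw
    | cons x w => simp only [List.head?_cons, Option.some.injEq] at hw; exact ⟨w, hw ▸ rfl⟩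
  set n := (false :: w).length
  have hn : 0 < n := Nat.succ_pos _
  have hlen : (subWSnoc (false :: w)).length = 2 * n + 1 := by simp [subWSnoc, length_subW, n]
  have getD_block : ∀ {i r}, i < n → r < 2 →
      (subWSnoc (false :: w)).getD (2 * i + r) false
        = (sub ((false :: w).getD i false)).getD r false :=
    fun hi hr => by
      rw [subWSnoc, List.getD_append _ _ _ _ (by rw [length_subW]; omega)]
      exact List.getD_flatMap_mul_add length_sub hi hr _ _
  have getD_last : (subWSnoc (false :: w)).getD (2 * n) false = false := by
    rw [subWSnoc, List.getD_append_right _ _ _ _ (by rw [length_subW])]; simp [length_subW, n]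
  constructor
  · intro h
    have hb : D (s + 1) = true := by
      rw [h 1 (by omega)]; exact (getD_block hn one_lt_two).trans rfl
    obtain ⟨t, rfl | rfl⟩ := Nat.even_or_odd' s
    · refine ⟨t, rfl, fun i hi => ?_⟩
      have := h (2 * i + 1) (by omega)
      rwa [show 2 * t + (2 * i + 1) = 2 * (t + i) + 1 by ring, D_two_mul_add_one,
        getD_block hi one_lt_two, getD_sub_one, Bool.not_inj_iff] at this
    · rw [show 2 * t + 1 + 1 = 2 * (t + 1) by ring, D_two_mul] at hb
      exact absurd hb Bool.false_ne_true
  · rintro ⟨t, rfl, ht⟩ u hu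
    rw [← Nat.div_add_mod u 2,
      show 2 * t + (2 * (u / 2) + u % 2) = 2 * (t + u / 2) + u % 2 by ring]
    rcases Nat.lt_or_ge (u / 2) n with hi | hi
    · rw [D_two_mul_add (Nat.mod_lt _ two_pos), ht _ hi, getD_block hi (Nat.mod_lt _ two_pos)]
    · have hu : u = 2 * n := by omega
      rw [hu, Nat.mul_div_cancel_left _ two_pos, Nat.mul_mod_right, add_zero, add_zero, D_two_mul,
        getD_last]

theorem occursAt_iterate_subWSnoc_iff {w : List Bool} (hw : w.head? = some false) (n s : ℕ) :
    occursAt (subWSnoc^[n] w) s ↔ ∃ t, s = 2 ^ n * t ∧ occursAt w t := by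
  induction n generalizing s with
  | zero => simp
  | succ n ih =>
    have hhead : (subWSnoc^[n] w).head? = some false := by
      cases n with
      | zero => exact hw
      | succ n => rw [Function.iterate_succ_apply']; exact head?_subWSnoc _
    simp only [Function.iterate_succ_apply', occursAt_subWSnoc_iff hhead, ih]
    constructor
    · rintro ⟨_, rfl, t, rfl, ht⟩
      exact ⟨t, by ring, ht⟩
    · rintro ⟨t, rfl, ht⟩
      exact ⟨2 ^ n * t, by ring, t, rfl, ht⟩

theorem dropLast_A_succ (m : ℕ) : (A (m + 1)).dropLast = subWSnoc (A m).dropLast := by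
  have hne : A m ≠ [] := by rw [← List.length_pos_iff, length_A]; positivity
  rw [A_succ, ← List.dropLast_append_getLast hne, subW, List.flatMap_append]
  cases (A m).getLast hne <;> simp [sub, subWSnoc, subW]

theorem E_one_eq_iterate (n : ℕ) : E (n + 1) 1 = subWSnoc^[n] [false] := by
  simp only [E, if_true]
  induction n with
  | zero => rfl
  | succ n ih => rw [dropLast_A_succ, ih, Function.iterate_succ_apply']

theorem E_two_eq_iterate (n : ℕ) : E (n + 1) 2 = subWSnoc^[n] [false, false] := by
  simp only [E, OfNat.ofNat_ne_one, if_false, Nat.add_sub_cancel]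
  induction n with
  | zero => rfl
  | succ n ih =>
    rw [Function.iterate_succ_apply', ← ih, subWSnoc_append, ← A_succ, dropLast_A_succ]

theorem nth_occursD_iterate_subWSnoc {w : List Bool} (hw : w.head? = some false) {e : ℕ → ℕ}
    (he : StrictMono e) (hocc : ∀ t, occursAt w t ↔ ∃ p, e p = t) (n : ℕ) :
    Nat.nth (OccursD (subWSnoc^[n] w)) = fun p => 2 ^ n * e p + 1 := by
  refine Nat.nth_eq_of_strictMono (fun a b hab => by simpa using he hab) fun j => ?_
  cases j with
  | zero => simp [OccursD]
  | succ s =>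
    simp only [occursD_add_one_iff, occursAt_iterate_subWSnoc_iff hw, hocc,
      Nat.add_right_cancel_iff]
    constructor
    · rintro ⟨_, rfl, p, rfl⟩; exact ⟨p, rfl⟩
    · rintro ⟨p, rfl⟩; exact ⟨_, rfl, p, rfl⟩

section SubstitutedWord

variable {β : Type*} (φ : Bool → List β) (d : β)

def prefixD (n : ℕ) : List Bool := (List.range n).map D

theorem length_prefixD (n : ℕ) : (prefixD n).length = n := by simp [prefixD]

theorem prefixD_succ (n : ℕ) : prefixD (n + 1) = prefixD n ++ [D n] := by
  simp [prefixD, List.range_succ]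

theorem prefixD_isPrefix {k n : ℕ} (h : k ≤ n) : prefixD k <+: prefixD n := by
  obtain ⟨j, rfl⟩ := Nat.exists_eq_add_of_le h
  exact ⟨_, by rw [prefixD, prefixD, List.range_add, List.map_append]⟩

theorem prefixD_two_pow (M : ℕ) : prefixD (2 ^ M) = A M :=
  List.ext_getElem (by rw [length_prefixD, length_A]) fun i hi _ => by
    rw [length_prefixD] at hi
    simp [prefixD, D_eq_getD_A hi,
      List.getElem?_eq_getElem (show i < (A M).length by rwa [length_A])]

/-- The infinite word `φ(D∞)`; `Theta1` and `Theta2` are `substD phi1 false` and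
`substD phi2 0` by definition. -/
def substD (n : ℕ) : β := ((A (n + 1)).flatMap φ).getD n d

def blockStart (k : ℕ) : ℕ := ((prefixD k).flatMap φ).length

variable {φ}

theorem substD_eq_getD (hφ : ∀ x, φ x ≠ []) {n K : ℕ}
    (h : n < ((prefixD K).flatMap φ).length) :
    substD φ d n = ((prefixD K).flatMap φ).getD n d := by
  have h' : n < ((prefixD (2 ^ (n + 1))).flatMap φ).length :=
    calc n < 2 ^ (n + 1) :=
          Nat.lt_two_pow_self.trans (Nat.pow_lt_pow_right one_lt_two n.lt_succ_self)
      _ = (prefixD (2 ^ (n + 1))).length := (length_prefixD _).symm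
      _ ≤ _ := List.length_le_length_flatMap hφ _
  rw [substD, ← prefixD_two_pow]
  rcases le_total K (2 ^ (n + 1)) with hle | hle
  · exact List.getD_of_isPrefix ((prefixD_isPrefix hle).flatMap φ) h d
  · exact (List.getD_of_isPrefix ((prefixD_isPrefix hle).flatMap φ) h' d).symm

theorem map_range_substD (hφ : ∀ x, φ x ≠ []) {n K : ℕ}
    (h : n ≤ ((prefixD K).flatMap φ).length) :
    (List.range n).map (substD φ d) = ((prefixD K).flatMap φ).take n :=
  List.ext_getElem (by simpa using h) fun i hi _ => by
    simp only [List.length_map, List.length_range] at hi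
    simp [substD_eq_getD d hφ (hi.trans_le h), List.getElem?_eq_getElem (hi.trans_le h)]

theorem map_range_substD_blockStart_add (hφ : ∀ x, φ x ≠ []) {k r : ℕ}
    (hr : r ≤ (φ (D k)).length) :
    (List.range (blockStart φ k + r)).map (substD φ d)
      = (prefixD k).flatMap φ ++ (φ (D k)).take r := by
  rw [blockStart, map_range_substD d hφ (K := k + 1) (by simpa [prefixD_succ] using hr),
    prefixD_succ, List.flatMap_append]
  simp [List.take_append]

theorem exists_eq_blockStart_add (hφ : ∀ x, φ x ≠ []) (n : ℕ) :
    ∃ k, ∃ r < (φ (D k)).length, n = blockStart φ k + r := by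
  induction n with
  | zero => exact ⟨0, 0, List.length_pos_iff.2 (hφ _), rfl⟩
  | succ n ih =>
    obtain ⟨k, r, hr, rfl⟩ := ih
    by_cases h : r + 1 < (φ (D k)).length
    · exact ⟨k, r + 1, h, rfl⟩
    · refine ⟨k + 1, 0, List.length_pos_iff.2 (hφ _), ?_⟩
      simp [blockStart, prefixD_succ]; omega

theorem exists_add_sum_map_substD_eq_iff (hφ : ∀ x, φ x ≠ []) {g : β → ℕ} {w : ℕ}
    (hw : ∀ x, ((φ x).map g).sum = w) (c t : ℕ) :
    (∃ p, c + (((List.range p).map (substD φ d)).map g).sum = t) ↔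
      ∃ k, ∃ r < (φ (D k)).length, c + w * k + (((φ (D k)).take r).map g).sum = t := by
  have hblocks : ∀ k, (((prefixD k).flatMap φ).map g).sum = w * k := fun k => by
    induction k with
    | zero => rfl
    | succ k ih => simp [prefixD_succ, hw, ih, mul_add]
  constructor
  · rintro ⟨p, rfl⟩
    obtain ⟨k, r, hr, rfl⟩ := exists_eq_blockStart_add hφ p
    exact ⟨k, r, hr, by rw [map_range_substD_blockStart_add d hφ hr.le, List.map_append,
      List.sum_append, hblocks, add_assoc]⟩
  · rintro ⟨k, r, hr, rfl⟩
    exact ⟨_, by rw [map_range_substD_blockStart_add d hφ hr.le, List.map_append,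
      List.sum_append, hblocks, add_assoc]⟩

end SubstitutedWord

/-- `gap1 (Θ₁ p)` is the distance from the `(p+1)`-th to the `(p+2)`-th letter `a` of `D∞`;
`gap2 (Θ₂ p)` plays the same role for the occurrences of `aa`. -/
def gap1 : Bool → ℕ
  | false => 2
  | true => 1

def gap2 : Fin 3 → ℕ := ![1, 7, 3]

def aPos (p : ℕ) : ℕ := (((List.range p).map Theta1).map gap1).sum

def aaPos (p : ℕ) : ℕ := 2 + (((List.range p).map Theta2).map gap2).sum

theorem strictMono_aPos : StrictMono aPos :=
  strictMono_sum_map_range _ fun x => by cases x <;> decide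

theorem strictMono_aaPos : StrictMono aaPos :=
  fun _ _ h => Nat.add_lt_add_left (strictMono_sum_map_range _ (by decide) h) 2

theorem exists_add_take_phi1_sum_iff (x : Bool) (c t : ℕ) :
    (∃ r < (phi1 x).length, c + (((phi1 x).take r).map gap1).sum = t) ↔
      t = c ∨ (t = c + 1 ∧ x = true) := by
  cases x <;> simp [phi1, gap1, Nat.le_one_iff_eq_zero_or_eq_one, eq_comm]

theorem exists_add_take_phi2_sum_iff (x : Bool) (c t : ℕ) :
    (∃ r < (phi2 x).length, c + (((phi2 x).take r).map gap2).sum = t) ↔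
      t = c ∨ t = c + 1 ∨ (x = true ∧ (t = c + 4 ∨ t = c + 5)) := by
  constructor
  · rintro ⟨r, hr, rfl⟩
    cases x <;> simp only [phi2, List.length_cons, List.length_nil] at hr <;>
      interval_cases r <;> simp [phi2, gap2]
  · rintro (rfl | rfl | ⟨rfl, rfl | rfl⟩)
    exacts [⟨0, by cases x <;> simp [phi2]⟩, ⟨1, by cases x <;> simp [phi2, gap2]⟩,
      ⟨2, by simp [phi2, gap2]⟩, ⟨3, by simp [phi2, gap2]⟩]

theorem D_eq_false_iff_exists_aPos (t : ℕ) : D t = false ↔ ∃ p, aPos p = t := by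
  have hφ : ∀ x, phi1 x ≠ [] := fun x => by cases x <;> simp [phi1]
  have hw : ∀ x, ((phi1 x).map gap1).sum = 2 := fun x => by cases x <;> rfl
  have := exists_add_sum_map_substD_eq_iff false hφ hw 0 t
  simp only [zero_add] at this
  rw [D_eq_false_iff]
  exact (exists_congr fun k => (exists_add_take_phi1_sum_iff _ _ _).symm).trans this.symm

theorem D_and_D_succ_eq_false_iff_exists_aaPos (t : ℕ) :
    D t = false ∧ D (t + 1) = false ↔ ∃ p, aaPos p = t := by
  have hφ : ∀ x, phi2 x ≠ [] := fun x => by cases x <;> simp [phi2]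
  have hw : ∀ x, ((phi2 x).map gap2).sum = 8 := fun x => by cases x <;> rfl
  rw [D_and_D_succ_eq_false_iff_exists_eight_mul]
  exact (exists_congr fun k => (exists_add_take_phi2_sum_iff _ _ _).symm).trans
    (exists_add_sum_map_substD_eq_iff (0 : Fin 3) hφ hw 2 t).symm

theorem aPos_eq (p : ℕ) : (aPos p : ℤ) = 2 * p - N1 true p := by
  have hsum : aPos p = N1 false p * 2 + N1 true p * 1 := by
    rw [aPos, List.sum_map_eq_sum_count_smul, Fintype.sum_bool]; simp [N1, gap1, add_comm]
  have hlen : N1 false p + N1 true p = p := by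
    rw [N1, N1, List.count_false_add_count_true, List.length_map, List.length_range]
  omega

theorem aaPos_eq (p : ℕ) : (aaPos p : ℤ) = 3 * p + 2 - 2 * N2 0 p + 4 * N2 1 p := by
  have hsum : aaPos p = 2 + (N2 0 p * 1 + N2 1 p * 7 + N2 2 p * 3) := by
    rw [aaPos, List.sum_map_eq_sum_count_smul, Fin.sum_univ_three]; simp [N2, gap2]
  have hlen : N2 0 p + N2 1 p + N2 2 p = p := by
    have := List.sum_map_eq_sum_count_smul ((List.range p).map Theta2) fun _ => 1
    simp only [List.map_const', List.sum_replicate, smul_eq_mul, mul_one, List.length_map,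
      List.length_range, Fin.sum_univ_three] at this
    exact this.symm
  omega

end PD

open PD
/-- Positions of the occurrences of envelope words: for every `m ≥ 1` and `p ≥ 0`,
`L(E m 1, p+1) = p·2^m − N₁(b,p)·2^(m-1) + 1` and
`L(E m 2, p+1) = (3p+2)·2^(m-1) − N₂(a,p)·2^m + N₂(b,p)·2^(m+1) + 1`. -/
theorem doubling_positions_formula (m : ℕ) (hm : 1 ≤ m) (p : ℕ) :
    (L (E m 1) (p + 1) : ℤ)
        = (p : ℤ) * 2 ^ m - (N1 true p : ℤ) * 2 ^ (m - 1) + 1 ∧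
      (L (E m 2) (p + 1) : ℤ)
        = (3 * (p : ℤ) + 2) * 2 ^ (m - 1) - (N2 0 p : ℤ) * 2 ^ m
            + (N2 1 p : ℤ) * 2 ^ (m + 1) + 1 := by
  obtain ⟨n, rfl⟩ : ∃ n, m = n + 1 := ⟨m - 1, by omega⟩
  have hL1 : L (E (n + 1) 1) (p + 1) = 2 ^ n * aPos p + 1 := by
    rw [L, E_one_eq_iterate, nth_occursD_iterate_subWSnoc rfl strictMono_aPos
      fun t => by simp [occursAt, D_eq_false_iff_exists_aPos]]
    rfl
  have hL2 : L (E (n + 1) 2) (p + 1) = 2 ^ n * aaPos p + 1 := by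
    rw [L, E_two_eq_iterate, nth_occursD_iterate_subWSnoc rfl strictMono_aaPos
      fun t => by simpa [occursAt, Nat.lt_succ_iff, Nat.le_one_iff_eq_zero_or_eq_one] using
        D_and_D_succ_eq_false_iff_exists_aaPos t]
    rfl
  rw [hL1, hL2]
  push_cast
  rw [aPos_eq, aaPos_eq]
  constructor <;> ring
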